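/- arXiv:1811.12759 — 2 statements merged into one kernel-verified Lean document; each statement's English description precedes it below -/
import Mathlib

section
/- Let S ⊆ ℝᵖ be a polyhedron {s : A_S s ≤ b_S}, M ∈ ℝ^{p×k}, B ⊆ ℝᵏ a nonempty bounded set, and ξ ∈ ℝᵖ. Then ξ ∈ S ⊖ MB if and only if for every row i, ⟨Mᵀ a_iᵀ, z⟩ ≤ b_i − ⟨a_iᵀ, ξ⟩ for all z ∈ B; equivalently, h_B(Mᵀ a_iᵀ) ≤ b_i − ⟨a_iᵀ, ξ⟩ for all i. -/
open Matrix

section Polyhedron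

variable {R ι m n : Type*} [CommRing R] [Fintype m] [Fintype n]

theorem mulVec_add_mulVec_apply (A : Matrix ι m R) (M : Matrix m n R) (ξ : m → R)
    (z : n → R) (i : ι) :
    (A *ᵥ (ξ + M *ᵥ z)) i = A i ⬝ᵥ ξ + (Mᵀ *ᵥ A i) ⬝ᵥ z := by
  rw [mulVec_add, Pi.add_apply, mulVec_transpose, ← dotProduct_mulVec]
  rfl

theorem forall_mem_image_add_mem_polyhedron_iff [PartialOrder R] [IsOrderedAddMonoid R]
    (A : Matrix ι m R) (b : ι → R) (M : Matrix m n R) (B : Set (n → R)) (ξ : m → R) :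
    (∀ y ∈ (fun z => M *ᵥ z) '' B, ξ + y ∈ {s | ∀ i, (A *ᵥ s) i ≤ b i}) ↔
      ∀ i, ∀ z ∈ B, (Mᵀ *ᵥ A i) ⬝ᵥ z ≤ b i - A i ⬝ᵥ ξ := by
  simp only [Set.forall_mem_image, Set.mem_ofPred_eq, mulVec_add_mulVec_apply,
    le_sub_iff_add_le']
  exact ⟨fun h i z hz => h hz i, fun h z hz i => h i z hz⟩

end Polyhedron

theorem csSup_image_le_iff_of_isBounded {E : Type*} [PseudoMetricSpace E] [ProperSpace E]
    {f : E → ℝ} (hf : Continuous f) {B : Set E} (hne : B.Nonempty)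
    (hbd : Bornology.IsBounded B) {c : ℝ} :
    sSup (f '' B) ≤ c ↔ ∀ z ∈ B, f z ≤ c := by
  have hbdd : BddAbove (f '' B) :=
    ((hbd.isCompact_closure.image hf).bddAbove).mono (Set.image_mono subset_closure)
  rw [csSup_le_iff hbdd (hne.image f), Set.forall_mem_image]

theorem stmt_7 {m p k : ℕ} (A : Matrix (Fin m) (Fin p) ℝ) (b : Fin m → ℝ)
    (M : Matrix (Fin p) (Fin k) ℝ) (B : Set (Fin k → ℝ))
    (hne : B.Nonempty) (hbd : Bornology.IsBounded B) (ξ : Fin p → ℝ) :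
    ((∀ y ∈ (fun z => M.mulVec z) '' B, ξ + y ∈ {s | ∀ i, A.mulVec s i ≤ b i}) ↔
      (∀ i, ∀ z ∈ B, M.transpose.mulVec (A i) ⬝ᵥ z ≤ b i - A i ⬝ᵥ ξ)) ∧
    ((∀ y ∈ (fun z => M.mulVec z) '' B, ξ + y ∈ {s | ∀ i, A.mulVec s i ≤ b i}) ↔
      (∀ i, sSup ((fun z => M.transpose.mulVec (A i) ⬝ᵥ z) '' B) ≤ b i - A i ⬝ᵥ ξ)) := by
  have hrows := forall_mem_image_add_mem_polyhedron_iff A b M B ξ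
  refine ⟨hrows, hrows.trans (forall_congr' fun i => ?_)⟩
  exact (csSup_image_le_iff_of_isBounded (continuous_const.dotProduct continuous_id)
    hne hbd).symm
end

section
/- Let S̄ = {z ∈ ℝᵏ : Āz ≤ b̄} be a polyhedron, r ∈ ℝᵏ with r ≥ 0, z ∈ ℝᵏ, and λ ≥ 0. If Āz + (Ā)⁺ r λ ≤ b̄, where (Ā)⁺ is the matrix of positive parts of entries of Ā, then the hyper-rectangle B(z, z + λr) is contained in S̄. -/
open Matrix

/-! Each coordinate contributes independently to `(A x)ᵢ`: on `[zⱼ, zⱼ + uⱼ]` the term `Aᵢⱼ xⱼ`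
is maximised at the right endpoint when `Aᵢⱼ > 0` and at the left endpoint otherwise, which is
exactly the bound `Aᵢⱼ zⱼ + (Aᵢⱼ)⁺ uⱼ`. -/

theorem mul_le_mul_add_max_zero_mul {R : Type*} [Ring R] [LinearOrder R] [IsOrderedRing R]
    {a x z u : R} (hzx : z ≤ x) (hxu : x ≤ z + u) : a * x ≤ a * z + max a 0 * u := by
  rcases le_total a 0 with ha | ha
  · rw [max_eq_right ha, zero_mul, add_zero]
    exact mul_le_mul_of_nonpos_left hzx ha
  · rw [max_eq_left ha, ← mul_add]
    exact mul_le_mul_of_nonneg_left hxu ha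

theorem dotProduct_le_add_sum_max_zero_mul {R ι : Type*} [Ring R] [LinearOrder R]
    [IsOrderedRing R] [Fintype ι] {v x z u : ι → R}
    (hx : ∀ j, z j ≤ x j ∧ x j ≤ z j + u j) :
    v ⬝ᵥ x ≤ v ⬝ᵥ z + ∑ j, max (v j) 0 * u j := by
  rw [dotProduct, dotProduct, ← Finset.sum_add_distrib]
  exact Finset.sum_le_sum fun j _ => mul_le_mul_add_max_zero_mul (hx j).1 (hx j).2

theorem stmt_13_general {m k : ℕ} (A : Matrix (Fin m) (Fin k) ℝ) (b : Fin m → ℝ)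
    (r : Fin k → ℝ) (z : Fin k → ℝ) (l : ℝ)
    (h : ∀ i, A.mulVec z i + (∑ j : Fin k, max (A i j) 0 * r j) * l ≤ b i) :
    {x : Fin k → ℝ | ∀ j, z j ≤ x j ∧ x j ≤ z j + l * r j} ⊆
      {x : Fin k → ℝ | ∀ i, A.mulVec x i ≤ b i} := by
  intro x hx i
  calc A.mulVec x i ≤ A.mulVec z i + ∑ j, max (A i j) 0 * (l * r j) :=
        dotProduct_le_add_sum_max_zero_mul hx
    _ = A.mulVec z i + (∑ j, max (A i j) 0 * r j) * l := by
        rw [Finset.sum_mul]; congr 1; exact Finset.sum_congr rfl fun j _ => by ring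
    _ ≤ b i := h i

theorem stmt_13 {m k : ℕ} (A : Matrix (Fin m) (Fin k) ℝ) (b : Fin m → ℝ)
    (r : Fin k → ℝ) (hr : 0 ≤ r) (z : Fin k → ℝ) (l : ℝ) (hl : 0 ≤ l)
    (h : ∀ i, A.mulVec z i + (∑ j : Fin k, max (A i j) 0 * r j) * l ≤ b i) :
    {x : Fin k → ℝ | ∀ j, z j ≤ x j ∧ x j ≤ z j + l * r j} ⊆
      {x : Fin k → ℝ | ∀ i, A.mulVec x i ≤ b i} :=
  stmt_13_general A b r z l h
end
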